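/- The gradient of the dual functional h is Lipschitz continuous: for all W₁, W₂ ∈ ℝ^n one has ‖∇h(W₁) − ∇h(W₂)‖ ≤ (‖B‖²/α + ‖C‖) ‖W₁ − W₂‖, where ‖B‖ and ‖C‖ denote operator norms with respect to the Euclidean norm and ∇h(W) = −BΦ(W) + CW + G. -/

import Mathlib

/-!
`Φ(W)` minimizes a quadratic over the convex set `K`, so it satisfies the first-order
variational inequality `⟨AΦ(W) − F + BᵀW, V − Φ(W)⟩ ≥ 0` for `V ∈ K`. Testing the inequalities
for `W₁` and `W₂` against each other's minimizer and adding them gives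
`α‖Φ(W₁) − Φ(W₂)‖² ≤ ⟨A(Φ(W₁) − Φ(W₂)), Φ(W₁) − Φ(W₂)⟩ ≤ ⟨W₂ − W₁, B(Φ(W₁) − Φ(W₂))⟩`,
so `Φ` is `‖B‖/α`-Lipschitz, and `∇h = −BΦ + C(·) + G` is then `(‖B‖²/α + ‖C‖)`-Lipschitz.
-/

open scoped RealInnerProductSpace

section QuadraticMinimization

variable {E H : Type*} [NormedAddCommGroup E] [InnerProductSpace ℝ E]
  [NormedAddCommGroup H] [InnerProductSpace ℝ H]

theorem hasFDerivAt_half_inner_map_self_sub_inner (A : E →L[ℝ] E) (f u : E) :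
    HasFDerivAt (fun V => (1 / 2 : ℝ) * ⟪A V, V⟫ - ⟪f, V⟫)
      ((1 / 2 : ℝ) • (fderivInnerCLM ℝ (A u, u)).comp (A.prod (ContinuousLinearMap.id ℝ E))
        - innerSL ℝ f) u :=
  ((A.hasFDerivAt.inner ℝ (hasFDerivAt_id u)).const_mul (1 / 2)).sub (innerSL ℝ f).hasFDerivAt

theorem inner_sub_nonneg_of_isMinOn_quadratic {A : E →L[ℝ] E}
    (hA : (A : E →ₗ[ℝ] E).IsSymmetric) {K : Set E} (hK : Convex ℝ K) {f u V : E}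
    (hu : u ∈ K) (hmin : IsMinOn (fun V => (1 / 2 : ℝ) * ⟪A V, V⟫ - ⟪f, V⟫) K u) (hV : V ∈ K) :
    0 ≤ ⟪A u - f, V - u⟫ := by
  have h := hmin.localize.hasFDerivWithinAt_nonneg
    (hasFDerivAt_half_inner_map_self_sub_inner A f u).hasFDerivWithinAt
    (sub_mem_posTangentConeAt_of_segment_subset (hK.segment_subset hu hV))
  have hsymm : ⟪A (V - u), u⟫ = ⟪A u, V - u⟫ := by
    rw [real_inner_comm]
    exact (hA u (V - u)).symm
  simp only [sub_apply, smul_apply, ContinuousLinearMap.comp_apply,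
    ContinuousLinearMap.prod_apply, fderivInnerCLM_apply, ContinuousLinearMap.id_apply,
    innerSL_apply_apply, hsymm, smul_eq_mul] at h
  rw [inner_sub_left]
  linarith

theorem inner_map_sub_le_of_isMinOn_quadratic {A : E →L[ℝ] E}
    (hA : (A : E →ₗ[ℝ] E).IsSymmetric) {K : Set E} (hK : Convex ℝ K) {f₁ f₂ u v : E}
    (hu : u ∈ K) (hv : v ∈ K)
    (hu_min : IsMinOn (fun V => (1 / 2 : ℝ) * ⟪A V, V⟫ - ⟪f₁, V⟫) K u)
    (hv_min : IsMinOn (fun V => (1 / 2 : ℝ) * ⟪A V, V⟫ - ⟪f₂, V⟫) K v) :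
    ⟪A (u - v), u - v⟫ ≤ ⟪f₁ - f₂, u - v⟫ := by
  have hu_var := inner_sub_nonneg_of_isMinOn_quadratic hA hK hu hu_min hv
  have hv_var := inner_sub_nonneg_of_isMinOn_quadratic hA hK hv hv_min hu
  have hsum : ⟪A u - f₁, v - u⟫ + ⟪A v - f₂, u - v⟫ = ⟪f₁ - f₂, u - v⟫ - ⟪A (u - v), u - v⟫ := by
    simp only [map_sub, inner_sub_left, inner_sub_right]
    ring
  linarith

theorem norm_sub_le_of_isMinOn_quadratic [CompleteSpace E] [CompleteSpace H] {A : E →L[ℝ] E}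
    (hA : (A : E →ₗ[ℝ] E).IsSymmetric) {α : ℝ} (hα : 0 < α)
    (hA_coer : ∀ V : E, α * ‖V‖ ^ 2 ≤ ⟪A V, V⟫) (B : E →L[ℝ] H) {K : Set E} (hK : Convex ℝ K)
    (F : E) {W₁ W₂ : H} {u v : E} (hu : u ∈ K) (hv : v ∈ K)
    (hu_min : IsMinOn
      (fun V => (1 / 2 : ℝ) * ⟪A V, V⟫ - ⟪F - ContinuousLinearMap.adjoint B W₁, V⟫) K u)
    (hv_min : IsMinOn
      (fun V => (1 / 2 : ℝ) * ⟪A V, V⟫ - ⟪F - ContinuousLinearMap.adjoint B W₂, V⟫) K v) :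
    ‖u - v‖ ≤ ‖B‖ / α * ‖W₁ - W₂‖ := by
  have hmono := inner_map_sub_le_of_isMinOn_quadratic hA hK hu hv hu_min hv_min
  have hquad : α * ‖u - v‖ ^ 2 ≤ ‖B‖ * ‖W₁ - W₂‖ * ‖u - v‖ :=
    calc α * ‖u - v‖ ^ 2 ≤ ⟪A (u - v), u - v⟫ := hA_coer (u - v)
      _ ≤ ⟪F - ContinuousLinearMap.adjoint B W₁ - (F - ContinuousLinearMap.adjoint B W₂),
          u - v⟫ := hmono
      _ = ⟪W₂ - W₁, B (u - v)⟫ := by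
        rw [sub_sub_sub_cancel_left, ← map_sub, ContinuousLinearMap.adjoint_inner_left]
      _ ≤ ‖W₂ - W₁‖ * ‖B (u - v)‖ := real_inner_le_norm _ _
      _ ≤ ‖W₂ - W₁‖ * (‖B‖ * ‖u - v‖) := by gcongr; exact B.le_opNorm _
      _ = ‖B‖ * ‖W₁ - W₂‖ * ‖u - v‖ := by rw [norm_sub_rev]; ring
  rcases (norm_nonneg (u - v)).eq_or_lt with h | h
  · rw [← h]
    positivity
  · rw [div_mul_eq_mul_div, le_div_iff₀ hα]
    nlinarith

end QuadraticMinimization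

theorem stmt_4 {m n : ℕ}
    (A : EuclideanSpace ℝ (Fin m) →L[ℝ] EuclideanSpace ℝ (Fin m))
    (hAsym : ∀ x y : EuclideanSpace ℝ (Fin m), ⟪A x, y⟫ = ⟪x, A y⟫)
    (α : ℝ) (hα : 0 < α)
    (hAcoer : ∀ V : EuclideanSpace ℝ (Fin m), α * ‖V‖ ^ 2 ≤ ⟪A V, V⟫)
    (B : EuclideanSpace ℝ (Fin m) →L[ℝ] EuclideanSpace ℝ (Fin n))
    (C : EuclideanSpace ℝ (Fin n) →L[ℝ] EuclideanSpace ℝ (Fin n))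
    (F : EuclideanSpace ℝ (Fin m)) (G : EuclideanSpace ℝ (Fin n))
    (K : Set (EuclideanSpace ℝ (Fin m)))
    (hKco : Convex ℝ K)
    -- `Phi W` is the minimizer over `K` of `V ↦ ½⟨AV, V⟩ − ⟨F − BᵀW, V⟩`
    (Phi : EuclideanSpace ℝ (Fin n) → EuclideanSpace ℝ (Fin m))
    (hPhi : ∀ W : EuclideanSpace ℝ (Fin n), Phi W ∈ K ∧ ∀ V ∈ K,
      (1 / 2 : ℝ) * ⟪A (Phi W), Phi W⟫ - ⟪F - (ContinuousLinearMap.adjoint B) W, Phi W⟫ ≤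
        (1 / 2 : ℝ) * ⟪A V, V⟫ - ⟪F - (ContinuousLinearMap.adjoint B) W, V⟫) :
    ∀ W₁ W₂ : EuclideanSpace ℝ (Fin n),
      ‖(-B (Phi W₁) + C W₁ + G) - (-B (Phi W₂) + C W₂ + G)‖ ≤
        (‖B‖ ^ 2 / α + ‖C‖) * ‖W₁ - W₂‖ := by
  intro W₁ W₂
  have hPhi_lip : ‖Phi W₂ - Phi W₁‖ ≤ ‖B‖ / α * ‖W₁ - W₂‖ := by
    rw [norm_sub_rev]
    exact norm_sub_le_of_isMinOn_quadratic hAsym hα hAcoer B hKco F (hPhi W₁).1 (hPhi W₂).1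
      (isMinOn_iff.2 (hPhi W₁).2) (isMinOn_iff.2 (hPhi W₂).2)
  calc ‖(-B (Phi W₁) + C W₁ + G) - (-B (Phi W₂) + C W₂ + G)‖
      = ‖B (Phi W₂ - Phi W₁) + C (W₁ - W₂)‖ := by rw [map_sub, map_sub]; abel_nf
    _ ≤ ‖B‖ * ‖Phi W₂ - Phi W₁‖ + ‖C‖ * ‖W₁ - W₂‖ :=
      (norm_add_le _ _).trans (add_le_add (B.le_opNorm _) (C.le_opNorm _))
    _ ≤ ‖B‖ * (‖B‖ / α * ‖W₁ - W₂‖) + ‖C‖ * ‖W₁ - W₂‖ := by gcongr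
    _ = (‖B‖ ^ 2 / α + ‖C‖) * ‖W₁ - W₂‖ := by ring
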